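/- Let Δ > 0 and 0 < Δ_P ≤ Δ. Then for every real c ≤ 0 and all reals r, r̂ with 0 ≤ r̂ ≤ r < Δ and r − r̂ ≤ Δ_P, the index-rounding error of the ratio table satisfies |Q⁺(c, r) − Q⁺(c, r̂)| ≤ 1 − Q⁺(0, Δ − Δ_P). -/

import Mathlib

/-!
Write `E c r = ∫₀ʳ g c t dt` with `g c t = Φ'(c) - Φ'(c - t)`, which is increasing in `t` and
vanishes at `t = 0`. Since `g c` is increasing, moving the interval `[r̂, r]` to the right end of
`[0, Δ]` and enlarging it to length `Δ_P` only increases the integral, so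
`Q(c, r) - Q(c, r̂) ≤ 1 - Q(c, Δ - Δ_P)`. Finally `Q(c, s) ≥ Q(0, s)` for `c ≤ 0`, because
`t ↦ g c t / g 0 t` is decreasing: this cross-ratio inequality integrates to
`E 0 s · E c Δ ≤ E c s · E 0 Δ`.
-/

/-- Φ⁺(x) = log₂(1 + 2^x) -/
noncomputable def Phip (x : ℝ) : ℝ := Real.logb 2 (1 + (2:ℝ) ^ x)

/-- (Φ⁺)'(x) = 2^x / (2^x + 1) -/
noncomputable def dPhip (x : ℝ) : ℝ := (2:ℝ) ^ x / ((2:ℝ) ^ x + 1)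

/-- First-order Taylor remainder E⁺(i, r) -/
noncomputable def Ep (i r : ℝ) : ℝ := Phip (i - r) - Phip i + r * dPhip i

/-- Error ratio Q⁺(i, r) = E⁺(i, r)/E⁺(i, Δ) -/
noncomputable def Qp (Δ i r : ℝ) : ℝ := Ep i r / Ep i Δ

open Real intervalIntegral Set
open MeasureTheory (volume)

section IntegralInequalities

variable {f g : ℝ → ℝ} {a b c : ℝ}

theorem Monotone.integral_le_integral_add (hg : Monotone g) (hab : a ≤ b) {d : ℝ} (hd : 0 ≤ d) :
    ∫ t in a..b, g t ≤ ∫ t in a + d..b + d, g t := by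
  rw [← integral_comp_add_right]
  exact integral_mono_on hab hg.intervalIntegrable
    (hg.comp (monotone_id.add_const d)).intervalIntegrable
    fun t _ ↦ hg (le_add_of_nonneg_right hd)

theorem integral_mul_integral_le_of_cross (hab : a ≤ b) (hbc : b ≤ c)
    (hf₁ : IntervalIntegrable f volume a b) (hg₁ : IntervalIntegrable g volume a b)
    (hf₂ : IntervalIntegrable f volume b c) (hg₂ : IntervalIntegrable g volume b c)
    (hcross : ∀ t ∈ Icc a b, ∀ t' ∈ Icc b c, f t * g t' ≤ g t * f t') :
    (∫ t in a..b, f t) * (∫ t in b..c, g t) ≤ (∫ t in a..b, g t) * (∫ t in b..c, f t) := by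
  rw [← integral_mul_const, ← integral_mul_const]
  refine integral_mono_on hab (hf₁.mul_const _) (hg₁.mul_const _) fun t ht ↦ ?_
  rw [← integral_const_mul, ← integral_const_mul]
  exact integral_mono_on hbc (hg₂.const_mul _) (hf₂.const_mul _) (hcross t ht)

end IntegralInequalities

theorem hasDerivAt_Phip (x : ℝ) : HasDerivAt Phip (dPhip x) x := by
  have hlog : HasDerivAt (fun x ↦ Real.log (1 + (2:ℝ) ^ x))
      ((2:ℝ) ^ x * Real.log 2 / (1 + (2:ℝ) ^ x)) x :=
    ((hasStrictDerivAt_const_rpow two_pos x).hasDerivAt.const_add 1).log (by positivity)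
  refine (hlog.div_const (Real.log 2)).congr_deriv ?_
  have : Real.log 2 ≠ 0 := by positivity
  rw [dPhip]
  field_simp
  ring

theorem continuous_dPhip : Continuous dPhip :=
  (continuous_const_rpow two_ne_zero).div
    ((continuous_const_rpow two_ne_zero).add continuous_const) fun x ↦ by positivity

theorem strictMono_dPhip : StrictMono dPhip := by
  intro a b hab
  have h : (2:ℝ) ^ a < (2:ℝ) ^ b := (rpow_lt_rpow_left_iff one_lt_two).mpr hab
  unfold dPhip
  rw [div_lt_div_iff₀ (by positivity) (by positivity)]
  linarith

noncomputable def dEp (i r : ℝ) : ℝ := dPhip i - dPhip (i - r)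

theorem hasDerivAt_Ep (i r : ℝ) : HasDerivAt (Ep i) (dEp i r) r := by
  refine ((((hasDerivAt_Phip (i - r)).comp_const_sub i r).sub_const (Phip i)).add
    (hasDerivAt_mul_const (dPhip i))).congr_deriv ?_
  rw [dEp]
  ring

theorem continuous_dEp (i : ℝ) : Continuous (dEp i) :=
  continuous_const.sub (continuous_dPhip.comp (continuous_const.sub continuous_id))

theorem strictMono_dEp (i : ℝ) : StrictMono (dEp i) :=
  fun _ _ h ↦ sub_lt_sub_left (strictMono_dPhip (sub_lt_sub_left h i)) _

theorem dEp_zero (i : ℝ) : dEp i 0 = 0 := by simp [dEp]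

theorem Ep_sub_Ep (i a b : ℝ) : Ep i b - Ep i a = ∫ t in a..b, dEp i t :=
  (integral_eq_sub_of_hasDerivAt (fun t _ ↦ hasDerivAt_Ep i t)
    ((continuous_dEp i).intervalIntegrable a b)).symm

theorem Ep_eq_integral (i r : ℝ) : Ep i r = ∫ t in (0:ℝ)..r, dEp i t := by
  rw [← Ep_sub_Ep]
  simp [Ep]

theorem Ep_pos (i : ℝ) {r : ℝ} (hr : 0 < r) : 0 < Ep i r := by
  rw [Ep_eq_integral]
  refine intervalIntegral_pos_of_pos_on ((continuous_dEp i).intervalIntegrable 0 r)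
    (fun t ht ↦ ?_) hr
  simpa [dEp_zero] using strictMono_dEp i ht.1

theorem monotoneOn_Ep (i : ℝ) : MonotoneOn (Ep i) (Ici 0) := by
  intro a ha b _ hab
  rw [← sub_nonneg, Ep_sub_Ep]
  refine integral_nonneg hab fun t ht ↦ ?_
  simpa [dEp_zero] using (strictMono_dEp i).monotone (ha.trans ht.1)

theorem Ep_sub_Ep_le (i : ℝ) {r rhat d Δ : ℝ} (hrr : rhat ≤ r) (hrΔ : r ≤ Δ)
    (hd : r - rhat ≤ d) (hdΔ : d ≤ Δ) :
    Ep i r - Ep i rhat ≤ Ep i Δ - Ep i (Δ - d) := calc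
  Ep i r - Ep i rhat = ∫ t in rhat..r, dEp i t := Ep_sub_Ep i rhat r
  _ ≤ ∫ t in rhat + (Δ - r)..r + (Δ - r), dEp i t :=
    (strictMono_dEp i).monotone.integral_le_integral_add hrr (by linarith)
  _ = Ep i Δ - Ep i (Δ - (r - rhat)) := by rw [Ep_sub_Ep]; ring_nf
  _ ≤ Ep i Δ - Ep i (Δ - d) := by
    gcongr
    exact monotoneOn_Ep i (sub_nonneg.mpr hdΔ) (mem_Ici.mpr (by linarith)) (by linarith)

/-- With `u = 2^c`, `x = 2^(-t)`, `x' = 2^(-t')` this is the cross inequality for `dEp`. -/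
theorem frac_cross_le {u x x' : ℝ} (hu0 : 0 < u) (hu1 : u ≤ 1) (hx' : 0 < x') (hxx : x' ≤ x)
    (hx1 : x ≤ 1) :
    (1 / 2 - x / (x + 1)) * (u / (u + 1) - u * x' / (u * x' + 1)) ≤
      (u / (u + 1) - u * x / (u * x + 1)) * (1 / 2 - x' / (x' + 1)) := by
  have hx : 0 < x := hx'.trans_le hxx
  have key : (u / (u + 1) - u * x / (u * x + 1)) * (1 / 2 - x' / (x' + 1)) -
      (1 / 2 - x / (x + 1)) * (u / (u + 1) - u * x' / (u * x' + 1)) =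
      u * (1 - x) * (1 - x') * (x - x') * (1 - u) /
        (2 * (u + 1) * (x + 1) * (x' + 1) * (u * x + 1) * (u * x' + 1)) := by
    field_simp
    ring
  rw [← sub_nonneg, key]
  have : 0 ≤ 1 - x := by linarith
  have : 0 ≤ 1 - x' := by linarith
  have : 0 ≤ x - x' := by linarith
  have : 0 ≤ 1 - u := by linarith
  positivity

theorem dEp_cross {c t t' : ℝ} (hc : c ≤ 0) (ht : 0 ≤ t) (htt' : t ≤ t') :
    dEp 0 t * dEp c t' ≤ dEp c t * dEp 0 t' := by
  have hsplit (s : ℝ) : (2:ℝ) ^ (c - s) = 2 ^ c * 2 ^ (-s) := by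
    rw [sub_eq_add_neg, rpow_add two_pos]
  have h := frac_cross_le (u := 2 ^ c) (x := 2 ^ (-t)) (x' := 2 ^ (-t')) (by positivity)
    (rpow_le_one_of_one_le_of_nonpos one_le_two hc) (by positivity)
    ((rpow_le_rpow_left_iff one_lt_two).mpr (neg_le_neg htt'))
    (rpow_le_one_of_one_le_of_nonpos one_le_two (neg_nonpos.mpr ht))
  simp only [dEp, dPhip, zero_sub, hsplit, rpow_zero]
  convert h using 3 <;> norm_num

theorem Ep_mul_Ep_le {c s Δ : ℝ} (hc : c ≤ 0) (hs : 0 ≤ s) (hsΔ : s ≤ Δ) :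
    Ep 0 s * Ep c Δ ≤ Ep c s * Ep 0 Δ := by
  have hcross := integral_mul_integral_le_of_cross hs hsΔ
    ((continuous_dEp 0).intervalIntegrable _ _) ((continuous_dEp c).intervalIntegrable _ _)
    ((continuous_dEp 0).intervalIntegrable _ _) ((continuous_dEp c).intervalIntegrable _ _)
    fun t ht t' ht' ↦ dEp_cross hc ht.1 (ht.2.trans ht'.1)
  rw [← Ep_eq_integral, ← Ep_eq_integral, ← Ep_sub_Ep, ← Ep_sub_Ep] at hcross
  linear_combination hcross

theorem Qp_zero_le_Qp {c s Δ : ℝ} (hc : c ≤ 0) (hs : 0 ≤ s) (hsΔ : s ≤ Δ) (hΔ : 0 < Δ) :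
    Qp Δ 0 s ≤ Qp Δ c s :=
  (div_le_div_iff₀ (Ep_pos 0 hΔ) (Ep_pos c hΔ)).mpr (Ep_mul_Ep_le hc hs hsΔ)

theorem stmt_10_general (Δ ΔP : ℝ) (hΔPΔ : ΔP ≤ Δ) :
    ∀ c r rhat : ℝ, c ≤ 0 → 0 ≤ rhat → rhat ≤ r → r < Δ → r - rhat ≤ ΔP →
      |Qp Δ c r - Qp Δ c rhat| ≤ 1 - Qp Δ 0 (Δ - ΔP) := by
  intro c r rhat hc hrhat hrr hrΔ hd
  have hΔ : 0 < Δ := by linarith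
  have hEΔ : 0 < Ep c Δ := Ep_pos c hΔ
  have hnonneg : 0 ≤ Qp Δ c r - Qp Δ c rhat :=
    sub_nonneg.mpr (div_le_div_of_nonneg_right (monotoneOn_Ep c hrhat (hrhat.trans hrr) hrr) hEΔ.le)
  have hsub : Qp Δ c r - Qp Δ c rhat ≤ 1 - Qp Δ c (Δ - ΔP) := by
    rw [Qp, Qp, Qp, ← sub_div, one_sub_div hEΔ.ne']
    exact div_le_div_of_nonneg_right (Ep_sub_Ep_le c hrr hrΔ.le hd hΔPΔ) hEΔ.le
  have hQ := Qp_zero_le_Qp hc (sub_nonneg.mpr hΔPΔ) (sub_le_self Δ (by linarith)) hΔ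
  rw [abs_of_nonneg hnonneg]
  linarith

theorem stmt_10 (Δ ΔP : ℝ) (hΔ : 0 < Δ) (hΔP : 0 < ΔP) (hΔPΔ : ΔP ≤ Δ) :
    ∀ c r rhat : ℝ, c ≤ 0 → 0 ≤ rhat → rhat ≤ r → r < Δ → r - rhat ≤ ΔP →
      |Qp Δ c r - Qp Δ c rhat| ≤ 1 - Qp Δ 0 (Δ - ΔP) :=
  stmt_10_general Δ ΔP hΔPΔ
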